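/- If 𝒫ₐ is any symmetric solution of A𝒫ₐ + 𝒫ₐAᵀ + (I−J)BBᵀ(I−Jᵀ) = 0 for a semistable A, then the unique solution also satisfying J X Jᵀ = 0 is 𝒫 = 𝒫ₐ − J 𝒫ₐ Jᵀ. -/

import Mathlib

/-!
The limit `J` of `exp (t • A)` absorbs the flow, `exp (s • A) * J = J`; letting `s → ∞` gives
`J * J = J` and differentiating at `s = 0` gives `A * J = 0`. Hence subtracting `J 𝒫ₐ Jᵀ` from `𝒫ₐ`
does not change `A 𝒫 + 𝒫 Aᵀ`, and it kills `J 𝒫 Jᵀ`. For uniqueness, the difference `D` of two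
solutions satisfies `A D + D Aᵀ = 0`, so `exp (t • A) * D * exp (t • Aᵀ)` is constant in `t`;
letting `t → ∞` gives `D = J D Jᵀ = 0`.
-/

open Matrix Filter NormedSpace Topology

section BanachAlgebra

variable {𝔸 : Type*} [NormedRing 𝔸] [NormedAlgebra ℝ 𝔸] [CompleteSpace 𝔸]

theorem exp_add_smul (a : 𝔸) (s t : ℝ) : exp ((s + t) • a) = exp (s • a) * exp (t • a) := by
  rw [add_smul]
  have hball (u : ℝ) : u • a ∈ Metric.eball (0 : 𝔸) (expSeries ℝ 𝔸).radius :=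
    (expSeries_radius_eq_top ℝ 𝔸).symm ▸ edist_lt_top _ _
  exact exp_add_of_commute_of_mem_ball (((Commute.refl a).smul_left s).smul_right t)
    (hball s) (hball t)

theorem exp_smul_mul_of_tendsto_exp_smul {a j : 𝔸}
    (hj : Tendsto (fun t : ℝ => exp (t • a)) atTop (𝓝 j)) (s : ℝ) :
    exp (s • a) * j = j := by
  have hshift : Tendsto (fun t : ℝ => exp (s • a) * exp (t • a)) atTop (𝓝 j) := by
    simpa only [Function.comp_def, id, exp_add_smul] using
      hj.comp (tendsto_atTop_add_const_left atTop s tendsto_id)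
  exact tendsto_nhds_unique (tendsto_const_nhds.mul hj) hshift

theorem isIdempotentElem_of_tendsto_exp_smul {a j : 𝔸}
    (hj : Tendsto (fun t : ℝ => exp (t • a)) atTop (𝓝 j)) : IsIdempotentElem j := by
  have hlim : Tendsto (fun t : ℝ => exp (t • a) * j) atTop (𝓝 (j * j)) := hj.mul_const j
  simp only [exp_smul_mul_of_tendsto_exp_smul hj] at hlim
  exact tendsto_nhds_unique hlim tendsto_const_nhds

theorem mul_eq_zero_of_tendsto_exp_smul {a j : 𝔸}
    (hj : Tendsto (fun t : ℝ => exp (t • a)) atTop (𝓝 j)) : a * j = 0 := by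
  have hderiv : HasDerivAt (fun t : ℝ => exp (t • a) * j) (a * exp ((0 : ℝ) • a) * j) 0 :=
    (hasDerivAt_exp_smul_const' a (0 : ℝ)).mul_const j
  simp only [exp_smul_mul_of_tendsto_exp_smul hj, zero_smul, exp_zero, mul_one] at hderiv
  exact hderiv.unique (hasDerivAt_const _ _)

theorem exp_smul_mul_mul_exp_smul_eq {a b d : 𝔸} (h : a * d + d * b = 0) (t : ℝ) :
    exp (t • a) * d * exp (t • b) = d := by
  let f : ℝ → 𝔸 := fun t => exp (t • a) * d * exp (t • b)
  have hderiv : ∀ t, HasDerivAt f 0 t := by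
    intro t
    have hf : HasDerivAt f
        (a * exp (t • a) * d * exp (t • b) + exp (t • a) * d * (exp (t • b) * b)) t :=
      ((hasDerivAt_exp_smul_const' a t).mul_const d).mul (hasDerivAt_exp_smul_const b t)
    have hcomm : a * exp (t • a) = exp (t • a) * a :=
      ((Commute.refl a).smul_left t).exp_left.symm
    convert hf using 1
    calc (0 : 𝔸) = exp (t • a) * (a * d + d * b) * exp (t • b) := by rw [h, mul_zero, zero_mul]
      _ = _ := by
        rw [hcomm, ((Commute.refl b).smul_left t).exp_left.eq]
        noncomm_ring
  simpa [f] using is_const_of_deriv_eq_zero (fun x => (hderiv x).differentiableAt)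
    (fun x => (hderiv x).deriv) t 0

theorem eq_mul_mul_of_tendsto_exp_smul {a b d j k : 𝔸}
    (hj : Tendsto (fun t : ℝ => exp (t • a)) atTop (𝓝 j))
    (hk : Tendsto (fun t : ℝ => exp (t • b)) atTop (𝓝 k)) (h : a * d + d * b = 0) :
    d = j * d * k := by
  have hlim := (hj.mul_const d).mul hk
  simp only [exp_smul_mul_mul_exp_smul_eq h] at hlim
  exact tendsto_nhds_unique tendsto_const_nhds hlim

end BanachAlgebra

theorem Matrix.tendsto_exp_smul_transpose {ι : Type*} [Fintype ι] [DecidableEq ι]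
    {A J : Matrix ι ι ℝ} (hJ : Tendsto (fun t : ℝ => exp (t • A)) atTop (𝓝 J)) :
    Tendsto (fun t : ℝ => exp (t • Aᵀ)) atTop (𝓝 Jᵀ) := by
  simpa only [Function.comp_def, id, ← transpose_smul, exp_transpose] using
    (continuous_id.matrix_transpose.tendsto J).comp hJ

section Ring

variable {R : Type*} [Ring R]

theorem mul_add_mul_sub_mul_mul_of_mul_eq_zero {a b j k p : R} (hj : a * j = 0) (hk : k * b = 0) :
    a * (p - j * p * k) + (p - j * p * k) * b = a * p + p * b := by
  rw [mul_sub, sub_mul, ← mul_assoc, ← mul_assoc, hj, mul_assoc _ k, hk]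
  simp

theorem IsIdempotentElem.mul_sub_mul_mul_mul_eq_zero {j k : R} (hj : IsIdempotentElem j)
    (hk : IsIdempotentElem k) (p : R) : j * (p - j * p * k) * k = 0 :=
  calc j * (p - j * p * k) * k = j * p * k - (j * j) * p * (k * k) := by noncomm_ring
    _ = 0 := by rw [hj.eq, hk.eq, sub_self]

end Ring

theorem pseudo_gramian_from_arbitrary_lyapunov_solution_general
    {n p : ℕ} (A J Pa : Matrix (Fin n) (Fin n) ℝ) (B : Matrix (Fin n) (Fin p) ℝ)
    (hJ : Tendsto (fun t : ℝ => exp (t • A)) atTop (nhds J))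
    (hPa : A * Pa + Pa * Aᵀ + (1 - J) * (B * Bᵀ) * (1 - Jᵀ) = 0) :
    (A * (Pa - J * Pa * Jᵀ) + (Pa - J * Pa * Jᵀ) * Aᵀ
        + (1 - J) * (B * Bᵀ) * (1 - Jᵀ) = 0
      ∧ J * (Pa - J * Pa * Jᵀ) * Jᵀ = 0)
    ∧ ∀ X : Matrix (Fin n) (Fin n) ℝ, Xᵀ = X →
        A * X + X * Aᵀ + (1 - J) * (B * Bᵀ) * (1 - Jᵀ) = 0 → J * X * Jᵀ = 0 →
        X = Pa - J * Pa * Jᵀ := by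
  -- any submultiplicative norm will do; it induces the usual topology on matrices
  let _ : NormedRing (Matrix (Fin n) (Fin n) ℝ) := Matrix.linftyOpNormedRing
  let _ : NormedAlgebra ℝ (Matrix (Fin n) (Fin n) ℝ) := Matrix.linftyOpNormedAlgebra
  have hJt := Matrix.tendsto_exp_smul_transpose hJ
  set P := Pa - J * Pa * Jᵀ
  have hP : A * P + P * Aᵀ = A * Pa + Pa * Aᵀ :=
    mul_add_mul_sub_mul_mul_of_mul_eq_zero (mul_eq_zero_of_tendsto_exp_smul hJ)
      (by rw [← transpose_mul, mul_eq_zero_of_tendsto_exp_smul hJ, transpose_zero])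
  have hJP : J * P * Jᵀ = 0 :=
    (isIdempotentElem_of_tendsto_exp_smul hJ).mul_sub_mul_mul_mul_eq_zero
      (isIdempotentElem_of_tendsto_exp_smul hJt) Pa
  refine ⟨⟨by rwa [hP], hJP⟩, fun X _ hX hJX => ?_⟩
  have hD : A * (X - P) + (X - P) * Aᵀ = 0 :=
    calc A * (X - P) + (X - P) * Aᵀ
        = (A * X + X * Aᵀ + (1 - J) * (B * Bᵀ) * (1 - Jᵀ))
          - (A * P + P * Aᵀ + (1 - J) * (B * Bᵀ) * (1 - Jᵀ)) := by noncomm_ring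
      _ = 0 := by rw [hX, hP, hPa, sub_self]
  have hJD : J * (X - P) * Jᵀ = 0 := by rw [mul_sub, sub_mul, hJX, hJP, sub_zero]
  rw [← sub_eq_zero, eq_mul_mul_of_tendsto_exp_smul hJ hJt hD, hJD]

/-- If `𝒫ₐ` is any symmetric solution of the Lyapunov equation
`A𝒫ₐ + 𝒫ₐAᵀ + (I−J)BBᵀ(I−Jᵀ) = 0` for a semistable `A`, then `𝒫 := 𝒫ₐ − J 𝒫ₐ Jᵀ`
also solves the Lyapunov equation, satisfies `J 𝒫 Jᵀ = 0`, and is the unique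
symmetric matrix with these two properties. -/
theorem pseudo_gramian_from_arbitrary_lyapunov_solution
    {n p : ℕ} (A J Pa : Matrix (Fin n) (Fin n) ℝ) (B : Matrix (Fin n) (Fin p) ℝ)
    (hJ : Tendsto (fun t : ℝ => exp (t • A)) atTop (nhds J))
    (hPa_symm : Paᵀ = Pa)
    (hPa : A * Pa + Pa * Aᵀ + (1 - J) * (B * Bᵀ) * (1 - Jᵀ) = 0) :
    (A * (Pa - J * Pa * Jᵀ) + (Pa - J * Pa * Jᵀ) * Aᵀ
        + (1 - J) * (B * Bᵀ) * (1 - Jᵀ) = 0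
      ∧ J * (Pa - J * Pa * Jᵀ) * Jᵀ = 0)
    ∧ ∀ X : Matrix (Fin n) (Fin n) ℝ, Xᵀ = X →
        A * X + X * Aᵀ + (1 - J) * (B * Bᵀ) * (1 - Jᵀ) = 0 → J * X * Jᵀ = 0 →
        X = Pa - J * Pa * Jᵀ :=
  pseudo_gramian_from_arbitrary_lyapunov_solution_general A J Pa B hJ hPa
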